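/- arXiv:1712.00934 — 6 statements merged into one kernel-verified Lean document; each statement's English description precedes it below -/
import Mathlib

section
/- Let Q be a finite quiver containing an oriented cycle through vertices all of which carry nonzero dimension. Then the moment map Φ_θ on the representation space is not proper: there exists an unbounded sequence ρ(n) in the representation space with Φ_θ(ρ(n)) constant. -/
open Matrix

/-- The moment map `Φ_θ` for the action of `K = Π_a U(d_a)` on the representation space
`𝒜 = ⊕_α Hom(ℂ^{d(s α)}, ℂ^{d(t α)})` of a quiver, with `Lie(K)*` identified with the
space of tuples of matrices via the trace inner product:
`Φ(ρ)_a = √-1 (λ_a·id + Σ_{t α = a} ρ_α ρ_α* − Σ_{s α = a} ρ_α* ρ_α)`. -/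
noncomputable def quiverMomentMap {Q0 Q1 : Type} [Fintype Q1] [DecidableEq Q0]
    (s t : Q1 → Q0) (d : Q0 → ℕ) (lam : Q0 → ℝ)
    (ρ : ∀ α : Q1, Matrix (Fin (d (t α))) (Fin (d (s α))) ℂ) (a : Q0) :
    Matrix (Fin (d a)) (Fin (d a)) ℂ :=
  Complex.I • ((lam a : ℂ) • (1 : Matrix (Fin (d a)) (Fin (d a)) ℂ)
    + (∑ α : Q1, if h : t α = a then h ▸ (ρ α * (ρ α)ᴴ) else 0)
    - (∑ α : Q1, if h : s α = a then h ▸ ((ρ α)ᴴ * ρ α) else 0))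

attribute [local instance] Matrix.frobeniusNormedAddCommGroup
attribute [local instance] Matrix.frobeniusNormedSpace

/- ### Auxiliary lemmas -/

private lemma std_mul_std {m n p : Type*} [Fintype n] [DecidableEq m] [DecidableEq n]
    [DecidableEq p] (i : m) (j : n) (k : p) :
    Matrix.single i j (1:ℂ) * Matrix.single j k (1:ℂ) = Matrix.single i k 1 := by
  ext a b
  simp only [mul_apply, Matrix.single, of_apply]
  rw [Finset.sum_eq_single j]
  · split_ifs <;> simp_all
  · intro x _ hx; simp [hx.symm]
  · intro h; exact absurd (Finset.mem_univ j) h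

private lemma std_conjT {m n : Type*} [DecidableEq m] [DecidableEq n]
    (i : m) (j : n) : (Matrix.single i j (1:ℂ))ᴴ = Matrix.single j i 1 := by
  ext a b
  simp only [Matrix.single, conjTranspose_apply, of_apply]
  split_ifs with h1 h2 h2 <;> simp_all

private lemma norm_std {m n : Type*} [Fintype m] [Fintype n] [DecidableEq m] [DecidableEq n]
    (i : m) (j : n) : ‖Matrix.single i j (1:ℂ)‖ = 1 := by
  rw [frobenius_norm_def]
  have : (∑ a : m, ∑ b : n, ‖Matrix.single i j (1:ℂ) a b‖ ^ (2:ℝ)) = 1 := by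
    simp only [Matrix.single, of_apply, ite_and]
    rw [Finset.sum_eq_single i, Finset.sum_eq_single j]
    · simp
    · intro b _ hb; simp [hb.symm]
    · intro h; exact absurd (Finset.mem_univ j) h
    · intro a _ ha; simp [ha.symm, Real.zero_rpow]
    · intro h; exact absurd (Finset.mem_univ i) h
  rw [this, Real.one_rpow]

/-- A rank ≤ 1 "partial identity" in `Hom(V_{s α}, V_{t α})`. -/
private noncomputable def Pmat {Q0 Q1 : Type} (s t : Q1 → Q0) (d : Q0 → ℕ) (α : Q1) :
    Matrix (Fin (d (t α))) (Fin (d (s α))) ℂ :=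
  if h : 0 < d (t α) ∧ 0 < d (s α) then Matrix.single ⟨0, h.1⟩ ⟨0, h.2⟩ 1 else 0

/-- The rank-one projection at the vertex `a` (or `0` if `d a = 0`). -/
private noncomputable def Dmat {Q0 : Type} (d : Q0 → ℕ) (a : Q0) :
    Matrix (Fin (d a)) (Fin (d a)) ℂ :=
  if h : 0 < d a then Matrix.single ⟨0, h⟩ ⟨0, h⟩ 1 else 0

private lemma key1 {Q0 Q1 : Type} (s t : Q1 → Q0) (d : Q0 → ℕ) (α : Q1) (r : ℝ)
    (h : r ≠ 0 → 0 < d (t α) ∧ 0 < d (s α)) :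
    ((r:ℂ) • Pmat s t d α) * ((r:ℂ) • Pmat s t d α)ᴴ = ((r ^ 2 : ℝ) : ℂ) • Dmat d (t α) := by
  by_cases hr : r = 0
  · simp [hr]
  · obtain ⟨h1, h2⟩ := h hr
    rw [conjTranspose_smul, Matrix.smul_mul, Matrix.mul_smul, smul_smul]
    unfold Pmat Dmat
    rw [dif_pos ⟨h1, h2⟩, dif_pos h1, std_conjT, std_mul_std]
    congr 1
    rw [Complex.star_def, Complex.conj_ofReal]
    push_cast
    ring

private lemma key2 {Q0 Q1 : Type} (s t : Q1 → Q0) (d : Q0 → ℕ) (α : Q1) (r : ℝ)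
    (h : r ≠ 0 → 0 < d (t α) ∧ 0 < d (s α)) :
    ((r:ℂ) • Pmat s t d α)ᴴ * ((r:ℂ) • Pmat s t d α) = ((r ^ 2 : ℝ) : ℂ) • Dmat d (s α) := by
  by_cases hr : r = 0
  · simp [hr]
  · obtain ⟨h1, h2⟩ := h hr
    rw [conjTranspose_smul, Matrix.smul_mul, Matrix.mul_smul, smul_smul]
    unfold Pmat Dmat
    rw [dif_pos ⟨h1, h2⟩, dif_pos h2, std_conjT, std_mul_std]
    congr 1
    rw [Complex.star_def, Complex.conj_ofReal]
    push_cast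
    ring

private lemma cast_smul_D {Q0 : Type} (d : Q0 → ℕ) {b a : Q0} (h : b = a)
    (X : Matrix (Fin (d b)) (Fin (d b)) ℂ) (z : ℂ) (hx : X = z • Dmat d b) :
    h ▸ X = z • Dmat d a := by subst h; exact hx

private lemma count_sum {Q1 Q0 : Type} [Fintype Q1] [DecidableEq Q1] (l : ℕ) (c : ℕ → Q1)
    (f : Q1 → Q0) (a : Q0) [DecidableEq Q0] :
    (∑ α : Q1, if f α = a then ((((Finset.range l).filter (fun i => c i = α)).card : ℂ)) else 0)
      = ∑ i ∈ Finset.range l, (if f (c i) = a then 1 else 0) := by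
  have key : ∀ α : Q1, (if f α = a then
        ((((Finset.range l).filter (fun i => c i = α)).card : ℂ)) else 0)
      = ∑ i ∈ Finset.range l, (if c i = α ∧ f α = a then 1 else 0) := by
    intro α
    split_ifs with h
    · rw [Finset.card_filter]
      push_cast
      exact Finset.sum_congr rfl fun i _ => by simp [h]
    · simp [h]
  rw [Finset.sum_congr rfl fun α _ => key α, Finset.sum_comm]
  refine Finset.sum_congr rfl fun i _ => ?_
  rw [Finset.sum_eq_single (c i)]
  · simp
  · intro b _ hb
    rw [if_neg]
    exact fun hc => hb hc.1.symm
  · intro h; exact absurd (Finset.mem_univ (c i)) h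

private lemma rotate_sum {Q1 Q0 : Type} (s t : Q1 → Q0) (l : ℕ) (hl : 1 ≤ l) (c : ℕ → Q1)
    (hchain : ∀ i, i + 1 < l → t (c i) = s (c (i + 1)))
    (hclosed : s (c 0) = t (c (l - 1))) (a : Q0) [DecidableEq Q0] :
    (∑ i ∈ Finset.range l, (if s (c i) = a then (1:ℂ) else 0))
      = ∑ i ∈ Finset.range l, (if t (c i) = a then 1 else 0) := by
  obtain ⟨n, rfl⟩ : ∃ n, l = n + 1 := ⟨l - 1, (Nat.succ_pred_eq_of_pos hl).symm⟩
  rw [Finset.sum_range_succ', Finset.sum_range_succ]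
  congr 1
  · refine Finset.sum_congr rfl fun i hi => ?_
    rw [← hchain i (by simpa using Nat.succ_lt_succ (Finset.mem_range.mp hi))]
  · rw [hclosed]
    simp

/-- If a finite quiver contains an oriented cycle all of whose vertices carry nonzero
dimension, then the moment map `Φ_θ` is not proper: there is an unbounded sequence
`ρ(n)` in the representation space on which `Φ_θ` is constant. -/
theorem moment_map_not_proper_of_cycle {Q0 Q1 : Type} [Fintype Q0] [Fintype Q1]
    [DecidableEq Q0] (s t : Q1 → Q0) (d : Q0 → ℕ) (lam : Q0 → ℝ)
    (l : ℕ) (hl : 1 ≤ l) (c : ℕ → Q1)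
    (hchain : ∀ i, i + 1 < l → t (c i) = s (c (i + 1)))
    (hclosed : s (c 0) = t (c (l - 1)))
    (hdim : ∀ i, i < l → d (s (c i)) ≠ 0) :
    ∃ ρseq : ℕ → ∀ α : Q1, Matrix (Fin (d (t α))) (Fin (d (s α))) ℂ,
      (∀ n, quiverMomentMap s t d lam (ρseq n) = quiverMomentMap s t d lam (ρseq 0)) ∧
      (∀ R : ℝ, ∃ n, R < ‖ρseq n‖) ∧
      ¬ (∀ K : Set (∀ a : Q0, Matrix (Fin (d a)) (Fin (d a)) ℂ), IsCompact K →
          IsCompact (quiverMomentMap s t d lam ⁻¹' K)) := by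
  classical
  -- multiplicity of each arrow in the cycle
  set m : Q1 → ℕ := fun α => ((Finset.range l).filter (fun i => c i = α)).card with hm
  set r : ℕ → Q1 → ℝ := fun n α => n * Real.sqrt (m α) with hr
  set ρseq : ℕ → ∀ α : Q1, Matrix (Fin (d (t α))) (Fin (d (s α))) ℂ :=
    fun n α => ((r n α : ℝ) : ℂ) • Pmat s t d α with hρ
  -- arrows of positive multiplicity have positive dimensions at both ends
  have hdims : ∀ α : Q1, m α ≠ 0 → 0 < d (t α) ∧ 0 < d (s α) := by
    intro α hα
    obtain ⟨i, hi, rfl⟩ : ∃ i, i ∈ Finset.range l ∧ c i = α := by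
      obtain ⟨i, hi⟩ := Finset.card_pos.mp (Nat.pos_of_ne_zero hα)
      simp only [Finset.mem_filter] at hi
      exact ⟨i, hi.1, hi.2⟩
    have hil : i < l := Finset.mem_range.mp hi
    constructor
    · by_cases h : i + 1 < l
      · rw [hchain i h]
        exact Nat.pos_of_ne_zero (hdim _ h)
      · have : i = l - 1 := by omega
        rw [this, ← hclosed]
        exact Nat.pos_of_ne_zero (hdim 0 hl)
    · exact Nat.pos_of_ne_zero (hdim i hil)
  have hrne : ∀ n α, r n α ≠ 0 → 0 < d (t α) ∧ 0 < d (s α) := by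
    intro n α h
    refine hdims α fun h0 => h ?_
    simp [hr, h0]
  have hsq : ∀ n α, (r n α) ^ 2 = (n : ℝ) ^ 2 * m α := by
    intro n α
    rw [hr]
    rw [mul_pow, Real.sq_sqrt (Nat.cast_nonneg _)]
  -- the moment map is constant along the sequence
  have Phi : ∀ n, quiverMomentMap s t d lam (ρseq n)
      = fun a => Complex.I • ((lam a : ℂ) • (1 : Matrix (Fin (d a)) (Fin (d a)) ℂ)) := by
    intro n
    funext a
    unfold quiverMomentMap
    have h1 : (∑ α : Q1, if h : t α = a then h ▸ (ρseq n α * (ρseq n α)ᴴ) else 0)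
        = (∑ α : Q1, if t α = a then ((n:ℂ)^2 * (m α : ℂ)) else 0) • Dmat d a := by
      rw [Finset.sum_smul]
      refine Finset.sum_congr rfl fun α _ => ?_
      rw [ite_smul, zero_smul]
      split_ifs with h
      · refine cast_smul_D d h _ _ ?_
        rw [hρ]
        rw [key1 s t d α (r n α) (hrne n α), hsq]
        push_cast
        ring_nf
      · rfl
    have h2 : (∑ α : Q1, if h : s α = a then h ▸ ((ρseq n α)ᴴ * ρseq n α) else 0)
        = (∑ α : Q1, if s α = a then ((n:ℂ)^2 * (m α : ℂ)) else 0) • Dmat d a := by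
      rw [Finset.sum_smul]
      refine Finset.sum_congr rfl fun α _ => ?_
      rw [ite_smul, zero_smul]
      split_ifs with h
      · refine cast_smul_D d h _ _ ?_
        rw [hρ]
        rw [key2 s t d α (r n α) (hrne n α), hsq]
        push_cast
        ring_nf
      · rfl
    have hsums : (∑ α : Q1, if t α = a then ((n:ℂ)^2 * (m α : ℂ)) else 0)
        = (∑ α : Q1, if s α = a then ((n:ℂ)^2 * (m α : ℂ)) else 0) := by
      have ht : (∑ α : Q1, if t α = a then ((n:ℂ)^2 * (m α : ℂ)) else 0)
          = (n:ℂ)^2 * ∑ α : Q1, if t α = a then (m α : ℂ) else 0 := by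
        rw [Finset.mul_sum]
        exact Finset.sum_congr rfl fun α _ => by rw [mul_ite, mul_zero]
      have hs : (∑ α : Q1, if s α = a then ((n:ℂ)^2 * (m α : ℂ)) else 0)
          = (n:ℂ)^2 * ∑ α : Q1, if s α = a then (m α : ℂ) else 0 := by
        rw [Finset.mul_sum]
        exact Finset.sum_congr rfl fun α _ => by rw [mul_ite, mul_zero]
      rw [ht, hs, hm]
      rw [count_sum l c t a, count_sum l c s a,
        rotate_sum s t l hl c hchain hclosed a]
    rw [h1, h2, hsums]
    simp
  have hnorm : ∀ n : ℕ, (n : ℝ) ≤ ‖ρseq n‖ := by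
    intro n
    have hm0 : m (c 0) ≠ 0 :=
      Finset.card_ne_zero_of_mem (Finset.mem_filter.mpr ⟨Finset.mem_range.mpr hl, rfl⟩)
    obtain ⟨h1, h2⟩ := hdims (c 0) hm0
    have hP : ‖Pmat s t d (c 0)‖ = 1 := by
      unfold Pmat
      rw [dif_pos ⟨h1, h2⟩, norm_std]
    calc (n : ℝ) = n * 1 := by ring
      _ ≤ n * Real.sqrt (m (c 0)) := by
          refine mul_le_mul_of_nonneg_left ?_ (Nat.cast_nonneg n)
          rw [show (1:ℝ) = Real.sqrt 1 from Real.sqrt_one.symm]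
          exact Real.sqrt_le_sqrt (by exact_mod_cast Nat.one_le_iff_ne_zero.mpr hm0)
      _ = ‖ρseq n (c 0)‖ := by
          rw [hρ]
          rw [norm_smul, hP, mul_one, Complex.norm_real, Real.norm_eq_abs, hr]
          rw [abs_of_nonneg (by positivity)]
      _ ≤ ‖ρseq n‖ := norm_le_pi_norm (ρseq n) (c 0)
  have hgrow : ∀ R : ℝ, ∃ n, R < ‖ρseq n‖ := by
    intro R
    refine ⟨⌊R⌋₊ + 1, lt_of_lt_of_le ?_ (hnorm (⌊R⌋₊ + 1))⟩
    calc R < ⌊R⌋₊ + 1 := Nat.lt_floor_add_one R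
      _ = ((⌊R⌋₊ + 1 : ℕ) : ℝ) := by push_cast; ring
  refine ⟨ρseq, fun n => by rw [Phi n, Phi 0], hgrow, ?_⟩
  intro hprop
  have hK := hprop {quiverMomentMap s t d lam (ρseq 0)} isCompact_singleton
  obtain ⟨C, hC⟩ := (Metric.isBounded_iff_subset_closedBall 0).mp hK.isBounded
  have hmem : ∀ n, ρseq n ∈ quiverMomentMap s t d lam ⁻¹'
      {quiverMomentMap s t d lam (ρseq 0)} := by
    intro n
    simp only [Set.mem_preimage, Set.mem_singleton_iff]
    rw [Phi n, Phi 0]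
  obtain ⟨n, hn⟩ := hgrow C
  have := hC (hmem n)
  rw [Metric.mem_closedBall, dist_zero_right] at this
  linarith
end

section
/- For the Kronecker n-quiver with two vertices a, b (both of nonzero dimension) and n parallel arrows from a to b, the squared norm of the moment map satisfies ‖Φ(ρ)‖² ≥ (1/d_a + 1/d_b)·‖ρ‖⁴ + 2(λ_b − λ_a)‖ρ‖² + λ_a² d_a + λ_b² d_b for every ρ = (ρ₁,…,ρ_n) ∈ 𝒜. -/
/-!
Write `A = Σⱼ ρⱼ*ρⱼ`, `B = Σⱼ ρⱼρⱼ*` and `t = ‖ρ‖²`. Since `‖X‖² = Re tr (X*X)`, both `A` and `B`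
have real trace `t`, and `‖c·1 + X‖² = c² d + 2c Re tr X + ‖X‖²` for a `d × d` matrix `X`.
Cauchy–Schwarz on the diagonal gives `(Re tr X)² ≤ d ‖X‖²`, so `‖A‖² ≥ t²/d_a` and
`‖B‖² ≥ t²/d_b`; adding the two expansions yields the bound.
-/

open Matrix

attribute [local instance] Matrix.frobeniusNormedAddCommGroup Matrix.frobeniusNormSMulClass

namespace Matrix

open RCLike Fintype

variable {𝕜 α m n : Type*} [RCLike 𝕜] [Fintype m] [Fintype n]

theorem frobenius_norm_sq_eq_sum [NormedAddCommGroup α] (A : Matrix m n α) :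
    ‖A‖ ^ 2 = ∑ i, ∑ j, ‖A i j‖ ^ 2 := by
  change ‖WithLp.toLp 2 fun i => WithLp.toLp 2 fun j => A i j‖ ^ 2 = _
  simp [PiLp.norm_sq_eq_of_L2]

theorem trace_conjTranspose_mul_self (A : Matrix m n 𝕜) :
    trace (Aᴴ * A) = ((‖A‖ ^ 2 : ℝ) : 𝕜) := by
  rw [frobenius_norm_sq_eq_sum, Finset.sum_comm]
  simp [trace, mul_apply, RCLike.conj_mul]

theorem trace_mul_conjTranspose_self (A : Matrix m n 𝕜) :
    trace (A * Aᴴ) = ((‖A‖ ^ 2 : ℝ) : 𝕜) := by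
  rw [trace_mul_comm, trace_conjTranspose_mul_self]

theorem norm_sq_smul_one_add [DecidableEq m] (c : ℝ) (A : Matrix m m 𝕜) :
    ‖(c : 𝕜) • (1 : Matrix m m 𝕜) + A‖ ^ 2
      = c ^ 2 * card m + 2 * c * re (trace A) + ‖A‖ ^ 2 := by
  rw [← ofReal_re (K := 𝕜) (‖_‖ ^ 2), ← ofReal_re (K := 𝕜) (‖A‖ ^ 2),
    ← trace_conjTranspose_mul_self, ← trace_conjTranspose_mul_self]
  simp only [algebraMap_smul, conjTranspose_add, conjTranspose_smul, star_trivial,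
    conjTranspose_one, mul_add, Algebra.mul_smul_comm, mul_one, smul_add, add_mul,
    Algebra.smul_mul_assoc, one_mul, trace_add, trace_smul, trace_one, trace_conjTranspose,
    star_def, map_add, smul_re, natCast_re, conj_re]
  ring

theorem re_trace_sq_le_card_mul_norm_sq (A : Matrix m m 𝕜) :
    re (trace A) ^ 2 ≤ card m * ‖A‖ ^ 2 := by
  calc re (trace A) ^ 2 = (∑ i, re (A i i)) ^ 2 := by simp [trace]
    _ ≤ card m * ∑ i, re (A i i) ^ 2 := sq_sum_le_card_mul_sum_sq
    _ ≤ card m * ∑ i, ∑ j, ‖A i j‖ ^ 2 := by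
      gcongr with i
      calc re (A i i) ^ 2 ≤ ‖A i i‖ ^ 2 := by
            rw [← sq_abs]; gcongr; exact abs_re_le_norm _
        _ ≤ ∑ j, ‖A i j‖ ^ 2 :=
            Finset.single_le_sum (f := fun j => ‖A i j‖ ^ 2) (fun _ _ => by positivity)
              (Finset.mem_univ i)
    _ = card m * ‖A‖ ^ 2 := by rw [frobenius_norm_sq_eq_sum]

theorem le_norm_sq_smul_one_add [DecidableEq m] (c : ℝ) (A : Matrix m m 𝕜) :
    c ^ 2 * card m + 2 * c * re (trace A) + re (trace A) ^ 2 / card m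
      ≤ ‖(c : 𝕜) • (1 : Matrix m m 𝕜) + A‖ ^ 2 := by
  have := div_le_of_le_mul₀ (Nat.cast_nonneg (card m)) (sq_nonneg ‖A‖)
    ((re_trace_sq_le_card_mul_norm_sq A).trans_eq (mul_comm _ _))
  rw [norm_sq_smul_one_add]
  linarith

theorem re_trace_sum_conjTranspose_mul_self {ι : Type*} [Fintype ι] (ρ : ι → Matrix m n 𝕜) :
    re (trace (∑ j, (ρ j)ᴴ * ρ j)) = ∑ j, ‖ρ j‖ ^ 2 := by
  simp [trace_sum, trace_conjTranspose_mul_self]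

theorem re_trace_sum_mul_conjTranspose_self {ι : Type*} [Fintype ι] (ρ : ι → Matrix m n 𝕜) :
    re (trace (∑ j, ρ j * (ρ j)ᴴ)) = ∑ j, ‖ρ j‖ ^ 2 := by
  simp [trace_sum, trace_mul_conjTranspose_self]

end Matrix

theorem kronecker_moment_map_norm_bound_general (n da db : ℕ)
    (la lb : ℝ) (ρ : Fin n → Matrix (Fin db) (Fin da) ℂ) :
    ‖Complex.I • ((la : ℂ) • (1 : Matrix (Fin da) (Fin da) ℂ) - ∑ j, (ρ j)ᴴ * ρ j)‖ ^ 2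
        + ‖Complex.I • ((lb : ℂ) • (1 : Matrix (Fin db) (Fin db) ℂ) + ∑ j, ρ j * (ρ j)ᴴ)‖ ^ 2
      ≥ (1 / (da : ℝ) + 1 / (db : ℝ)) * (∑ j, ‖ρ j‖ ^ 2) ^ 2
        + 2 * (lb - la) * (∑ j, ‖ρ j‖ ^ 2) + la ^ 2 * da + lb ^ 2 * db := by
  have ha := le_norm_sq_smul_one_add la (-∑ j, (ρ j)ᴴ * ρ j)
  have hb := le_norm_sq_smul_one_add lb (∑ j, ρ j * (ρ j)ᴴ)
  simp only [trace_neg, map_neg, neg_sq, re_trace_sum_conjTranspose_mul_self,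
    re_trace_sum_mul_conjTranspose_self, Fintype.card_fin, ← sub_eq_add_neg,
    RCLike.ofReal_eq_complex_ofReal] at ha hb
  rw [norm_smul, norm_smul, Complex.norm_I, one_mul, one_mul, add_mul, one_div_mul_eq_div,
    one_div_mul_eq_div]
  linarith

/-- The moment map norm bound for the Kronecker `n`-quiver:
`‖Φ(ρ)‖² ≥ (1/d_a + 1/d_b)‖ρ‖⁴ + 2(λ_b − λ_a)‖ρ‖² + λ_a² d_a + λ_b² d_b`, where
`Φ(ρ) = √-1 (λ_a·id − Σⱼ ρⱼ*ρⱼ, λ_b·id + Σⱼ ρⱼρⱼ*)` and all norms are Frobenius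
(trace inner product) norms, with `‖ρ‖² = Σⱼ ‖ρⱼ‖²`. -/
theorem kronecker_moment_map_norm_bound (n da db : ℕ) (hda : 1 ≤ da) (hdb : 1 ≤ db)
    (la lb : ℝ) (ρ : Fin n → Matrix (Fin db) (Fin da) ℂ) :
    ‖Complex.I • ((la : ℂ) • (1 : Matrix (Fin da) (Fin da) ℂ) - ∑ j, (ρ j)ᴴ * ρ j)‖ ^ 2
        + ‖Complex.I • ((lb : ℂ) • (1 : Matrix (Fin db) (Fin db) ℂ) + ∑ j, ρ j * (ρ j)ᴴ)‖ ^ 2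
      ≥ (1 / (da : ℝ) + 1 / (db : ℝ)) * (∑ j, ‖ρ j‖ ^ 2) ^ 2
        + 2 * (lb - la) * (∑ j, ‖ρ j‖ ^ 2) + la ^ 2 * da + lb ^ 2 * db :=
  kronecker_moment_map_norm_bound_general n da db la lb ρ
end

section
/- For the Kronecker n-quiver with both vertex dimensions nonzero, the moment map Φ : 𝒜 → Lie(K)* is proper. -/
/-!
With the Frobenius norm on each `ρⱼ`, the trace of the first component of the moment map is
`√-1 (λ_a d_a - Σⱼ ‖ρⱼ‖²)`, so its imaginary part `λ_a d_a - Σⱼ ‖ρⱼ‖²` bounds `‖ρ‖²`. On the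
compact set `K` this imaginary part is bounded, hence `Φ⁻¹(K)` is bounded; it is closed as `Φ` is
continuous, so it is compact by Heine–Borel.
-/

open Matrix

theorem pi_norm_le_sqrt_sum_norm_sq {ι : Type*} [Fintype ι] {G : ι → Type*}
    [∀ i, SeminormedAddGroup (G i)] (x : ∀ i, G i) : ‖x‖ ≤ √(∑ i, ‖x i‖ ^ 2) :=
  (pi_norm_le_iff_of_nonneg (Real.sqrt_nonneg _)).2 fun i =>
    Real.le_sqrt_of_sq_le <| Finset.single_le_sum (fun j _ => sq_nonneg ‖x j‖) (Finset.mem_univ i)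

theorem isCompact_preimage_of_norm_le {E Y : Type*} [SeminormedAddCommGroup E] [ProperSpace E]
    [TopologicalSpace Y] [T2Space Y] {f : E → Y} (hf : Continuous f) {g : Y → ℝ}
    (hg : Continuous g) (hfg : ∀ x, ‖x‖ ≤ g (f x)) {K : Set Y} (hK : IsCompact K) :
    IsCompact (f ⁻¹' K) := by
  obtain ⟨C, hC⟩ := hK.bddAbove_image hg.continuousOn
  refine Metric.isCompact_of_isClosed_isBounded (hK.isClosed.preimage hf) ?_
  refine (Metric.isBounded_closedBall (x := 0) (r := C)).subset fun x hx => ?_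
  rw [mem_closedBall_zero_iff]
  exact (hfg x).trans (hC ⟨f x, hx, rfl⟩)

section Frobenius

open scoped Matrix.Norms.Frobenius

theorem Matrix.frobenius_norm_sq_eq_sum_s5 {m n α : Type*} [Fintype m] [Fintype n]
    [SeminormedAddCommGroup α] (A : Matrix m n α) : ‖A‖ ^ 2 = ∑ i, ∑ j, ‖A i j‖ ^ 2 := by
  rw [frobenius_norm_def, ← Real.rpow_natCast, ← Real.rpow_mul (by positivity)]
  norm_num

theorem Matrix.trace_conjTranspose_mul_self_eq_frobenius_norm_sq {m n 𝕜 : Type*} [Fintype m]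
    [Fintype n] [RCLike 𝕜] (A : Matrix m n 𝕜) : (Aᴴ * A).trace = ((‖A‖ ^ 2 : ℝ) : 𝕜) := by
  rw [frobenius_norm_sq_eq_sum_s5, Finset.sum_comm]
  push_cast
  simp [trace, mul_apply, RCLike.conj_mul]

theorem im_trace_I_smul_sub_sum_conjTranspose_mul_self {ι m n : Type*} [Fintype ι] [Fintype m]
    [Fintype n] [DecidableEq n] (l : ℝ) (ρ : ι → Matrix m n ℂ) :
    (Complex.I • ((l : ℂ) • (1 : Matrix n n ℂ) - ∑ j, (ρ j)ᴴ * ρ j)).trace.im =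
      l * Fintype.card n - ∑ j, ‖ρ j‖ ^ 2 := by
  simp [trace_sum, trace_conjTranspose_mul_self_eq_frobenius_norm_sq, -Complex.ofReal_pow]

end Frobenius

theorem kronecker_moment_map_proper_general (n da db : ℕ)
    (la lb : ℝ)
    (Φ : (Fin n → Matrix (Fin db) (Fin da) ℂ) →
      Matrix (Fin da) (Fin da) ℂ × Matrix (Fin db) (Fin db) ℂ)
    (hΦ : ∀ ρ, Φ ρ =
      (Complex.I • ((la : ℂ) • (1 : Matrix (Fin da) (Fin da) ℂ) - ∑ j, (ρ j)ᴴ * ρ j),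
       Complex.I • ((lb : ℂ) • (1 : Matrix (Fin db) (Fin db) ℂ) + ∑ j, ρ j * (ρ j)ᴴ))) :
    ∀ K : Set (Matrix (Fin da) (Fin da) ℂ × Matrix (Fin db) (Fin db) ℂ),
      IsCompact K → IsCompact (Φ ⁻¹' K) := by
  intro K hK
  have hcont : Continuous Φ := funext hΦ ▸ by fun_prop
  open scoped Matrix.Norms.Frobenius in
  refine isCompact_preimage_of_norm_le hcont (g := fun P => √(la * da - P.1.trace.im))
    (by fun_prop) (fun ρ => ?_) hK
  rw [hΦ, im_trace_I_smul_sub_sum_conjTranspose_mul_self, Fintype.card_fin, sub_sub_cancel]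
  exact pi_norm_le_sqrt_sum_norm_sq ρ

/-- The moment map for the Kronecker `n`-quiver with both vertex dimensions nonzero,
`Φ(ρ) = √-1 (λ_a·id − Σⱼ ρⱼ*ρⱼ, λ_b·id + Σⱼ ρⱼρⱼ*)`, is proper: the preimage of any
compact set is compact. -/
theorem kronecker_moment_map_proper (n da db : ℕ) (hda : 1 ≤ da) (hdb : 1 ≤ db)
    (la lb : ℝ)
    (Φ : (Fin n → Matrix (Fin db) (Fin da) ℂ) →
      Matrix (Fin da) (Fin da) ℂ × Matrix (Fin db) (Fin db) ℂ)
    (hΦ : ∀ ρ, Φ ρ =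
      (Complex.I • ((la : ℂ) • (1 : Matrix (Fin da) (Fin da) ℂ) - ∑ j, (ρ j)ᴴ * ρ j),
       Complex.I • ((lb : ℂ) • (1 : Matrix (Fin db) (Fin db) ℂ) + ∑ j, ρ j * (ρ j)ᴴ))) :
    ∀ K : Set (Matrix (Fin da) (Fin da) ℂ × Matrix (Fin db) (Fin db) ℂ),
      IsCompact K → IsCompact (Φ ⁻¹' K) :=
  kronecker_moment_map_proper_general n da db la lb Φ hΦ
end

section
/- Let Q be a nonempty finite acyclic quiver, d ∈ ℕ^{Q₀} any dimension vector, and θ ∈ ℚ^{Q₀} a rational weight. Then the moment map Φ_θ : 𝒜 → Lie(K)* for the action of K = Π_a U(d_a) on the representation space 𝒜 is proper. -/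
/-!
Since `Q` has no oriented cycles, there is a height function `h : Q₀ → ℕ` with
`h (s α) < h (t α)` for every arrow. Pairing `Φ(ρ)` with the central element `√-1·h` of `Lie(K)`
gives `Σ_a h_a λ_a d_a + Σ_α (h (t α) - h (s α)) ‖ρ_α‖²`, and every coefficient
`h (t α) - h (s α)` is at least `1`. Hence `Σ_α ‖ρ_α‖²` is bounded on `Φ⁻¹(K)` for compact `K`,
which is closed because `Φ` is continuous.
-/

open Matrix

section Height

theorem exists_height_of_irrefl_transGen {α : Type*} [Fintype α] {r : α → α → Prop}
    (hr : ∀ a, ¬ Relation.TransGen r a a) : ∃ h : α → ℕ, ∀ a b, r a b → h a < h b := by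
  classical
  refine ⟨fun a => (Finset.univ.filter (Relation.TransGen r · a)).card, fun a b hab => ?_⟩
  have hsub : Finset.univ.filter (Relation.TransGen r · a)
      ⊆ Finset.univ.filter (Relation.TransGen r · b) := by
    intro c hc
    simp only [Finset.mem_filter, Finset.mem_univ, true_and] at hc ⊢
    exact hc.tail hab
  refine Finset.card_lt_card ((Finset.ssubset_iff_of_subset hsub).2 ⟨a, ?_, ?_⟩)
  · simpa using Relation.TransGen.single hab
  · simpa using hr a

variable {Q0 Q1 : Type*} (s t : Q1 → Q0)

theorem exists_path_of_transGen {a b : Q0}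
    (hab : Relation.TransGen (fun x y => ∃ α, s α = x ∧ t α = y) a b) :
    ∃ (l : ℕ) (c : ℕ → Q1), 1 ≤ l ∧ (∀ i, i + 1 < l → t (c i) = s (c (i + 1))) ∧
      s (c 0) = a ∧ t (c (l - 1)) = b := by
  induction hab with
  | single hab =>
    obtain ⟨α, rfl, rfl⟩ := hab
    exact ⟨1, fun _ => α, le_rfl, fun i hi => by omega, rfl, rfl⟩
  | tail _ hbc ih =>
    obtain ⟨l, c, hl, hchain, hstart, hend⟩ := ih
    obtain ⟨α, rfl, rfl⟩ := hbc
    refine ⟨l + 1, fun i => if i < l then c i else α, by omega, fun i hi => ?_, ?_, ?_⟩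
    · by_cases hil : i + 1 < l
      · simpa [show i < l by omega, hil] using hchain i hil
      · obtain rfl : i = l - 1 := by omega
        simpa [show l - 1 < l by omega, hil] using hend
    · simpa [show 0 < l by omega] using hstart
    · simp

theorem exists_height_of_acyclic [Fintype Q0]
    (hacyclic : ¬ ∃ (l : ℕ) (c : ℕ → Q1), 1 ≤ l ∧
      (∀ i, i + 1 < l → t (c i) = s (c (i + 1))) ∧ s (c 0) = t (c (l - 1))) :
    ∃ h : Q0 → ℕ, ∀ α, h (s α) < h (t α) := by
  obtain ⟨h, hh⟩ := exists_height_of_irrefl_transGen fun a ha => by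
    obtain ⟨l, c, hl, hchain, hstart, hend⟩ := exists_path_of_transGen s t ha
    exact hacyclic ⟨l, c, hl, hchain, hstart.trans hend.symm⟩
  exact ⟨h, fun α => hh _ _ ⟨α, rfl, rfl⟩⟩

end Height

namespace Matrix

variable {m n : Type*} [Fintype m] [Fintype n]

noncomputable def frobeniusNormSq (A : Matrix m n ℂ) : ℝ := ∑ i, ∑ j, Complex.normSq (A i j)

theorem frobeniusNormSq_nonneg (A : Matrix m n ℂ) : 0 ≤ A.frobeniusNormSq :=
  Finset.sum_nonneg fun _ _ => Finset.sum_nonneg fun _ _ => Complex.normSq_nonneg _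

theorem normSq_le_frobeniusNormSq (A : Matrix m n ℂ) (i : m) (j : n) :
    Complex.normSq (A i j) ≤ A.frobeniusNormSq :=
  (Finset.single_le_sum (fun _ _ => Complex.normSq_nonneg _) (Finset.mem_univ j)).trans
    (Finset.single_le_sum (f := fun i => ∑ j, Complex.normSq (A i j))
      (fun _ _ => Finset.sum_nonneg fun _ _ => Complex.normSq_nonneg _) (Finset.mem_univ i))

theorem trace_mul_conjTranspose_eq_frobeniusNormSq (A : Matrix m n ℂ) :
    (A * Aᴴ).trace = A.frobeniusNormSq := by
  simp [frobeniusNormSq, trace, mul_apply, Complex.mul_conj]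

theorem trace_conjTranspose_mul_eq_frobeniusNormSq (A : Matrix m n ℂ) :
    (Aᴴ * A).trace = A.frobeniusNormSq := by
  rw [trace_mul_comm, trace_mul_conjTranspose_eq_frobeniusNormSq]

end Matrix

theorem isCompact_setOf_forall_norm_apply_le {ι : Type*} {m n : ι → Type*} (R : ℝ) :
    IsCompact {ρ : ∀ k, Matrix (m k) (n k) ℂ | ∀ k i j, ‖ρ k i j‖ ≤ R} := by
  have hbox := isCompact_univ_pi fun k => isCompact_univ_pi fun (_ : m k) =>
    isCompact_univ_pi fun (_ : n k) => isCompact_closedBall (0 : ℂ) R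
  simp only [Set.pi, Set.mem_univ, Metric.mem_closedBall, dist_zero_right, forall_const] at hbox
  exact hbox

section Cast

variable {ι : Type*} {d : ι → ℕ} {x a : ι} [Decidable (x = a)]

theorem trace_dite_cast (M : Matrix (Fin (d x)) (Fin (d x)) ℂ) :
    (if h : x = a then (h ▸ M : Matrix (Fin (d a)) (Fin (d a)) ℂ) else 0).trace
      = if x = a then M.trace else 0 := by
  split_ifs with h
  · subst h; rfl
  · exact trace_zero _ _

theorem Continuous.dite_cast {X : Type*} [TopologicalSpace X]
    {f : X → Matrix (Fin (d x)) (Fin (d x)) ℂ} (hf : Continuous f) :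
    Continuous fun ρ => if h : x = a then (h ▸ f ρ : Matrix (Fin (d a)) (Fin (d a)) ℂ) else 0 := by
  split_ifs with h
  · subst h; exact hf
  · exact continuous_const

end Cast

section CentralPairing

variable {Q0 : Type} [Fintype Q0] (d : Q0 → ℕ)

/-- The pairing `⟨m, √-1 h⟩ = -Σ_a tr(m_a · √-1 h_a)` of `m ∈ Lie(K)` with the central element
`√-1 h = (√-1 h_a · id)_a`. -/
noncomputable def centralPairing (h : Q0 → ℝ) (m : ∀ a : Q0, Matrix (Fin (d a)) (Fin (d a)) ℂ) :
    ℝ :=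
  ∑ a, h a * (-Complex.I * (m a).trace).re

theorem continuous_centralPairing (h : Q0 → ℝ) : Continuous (centralPairing d h) :=
  continuous_finsetSum _ fun a _ => continuous_const.mul <| Complex.continuous_re.comp <|
    continuous_const.mul (continuous_apply a).matrix_trace

end CentralPairing

section MomentMap

variable {Q0 Q1 : Type} [Fintype Q1] [DecidableEq Q0] (s t : Q1 → Q0) (d : Q0 → ℕ)
  (lam : Q0 → ℝ)

theorem continuous_quiverMomentMap : Continuous (quiverMomentMap s t d lam) := by
  refine continuous_pi fun a => ?_
  unfold quiverMomentMap
  refine (continuous_const_smul Complex.I).comp (.sub (.add continuous_const ?_) ?_)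
  · exact continuous_finsetSum _ fun α _ =>
      ((continuous_apply α).matrix_mul (continuous_apply α).matrix_conjTranspose).dite_cast
  · exact continuous_finsetSum _ fun α _ =>
      ((continuous_apply α).matrix_conjTranspose.matrix_mul (continuous_apply α)).dite_cast

theorem trace_quiverMomentMap (ρ : ∀ α : Q1, Matrix (Fin (d (t α))) (Fin (d (s α))) ℂ) (a : Q0) :
    (quiverMomentMap s t d lam ρ a).trace = Complex.I * ((lam a * d a
      + (∑ α, if t α = a then (ρ α).frobeniusNormSq else 0)
      - (∑ α, if s α = a then (ρ α).frobeniusNormSq else 0) : ℝ) : ℂ) := by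
  rw [quiverMomentMap, trace_smul, smul_eq_mul, trace_sub, trace_add, trace_smul, trace_one,
    trace_sum, trace_sum]
  simp only [trace_dite_cast, trace_mul_conjTranspose_eq_frobeniusNormSq,
    trace_conjTranspose_mul_eq_frobeniusNormSq]
  push_cast [Fintype.card_fin, apply_ite (fun z : ℝ => (z : ℂ)), smul_eq_mul]
  ring

variable [Fintype Q0]

theorem centralPairing_quiverMomentMap (h : Q0 → ℝ)
    (ρ : ∀ α : Q1, Matrix (Fin (d (t α))) (Fin (d (s α))) ℂ) :
    centralPairing d h (quiverMomentMap s t d lam ρ)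
      = ∑ a, h a * (lam a * d a) + ∑ α, (h (t α) - h (s α)) * (ρ α).frobeniusNormSq := by
  have hre : ∀ a, (-Complex.I * (quiverMomentMap s t d lam ρ a).trace).re = lam a * d a
      + (∑ α, if t α = a then (ρ α).frobeniusNormSq else 0)
      - (∑ α, if s α = a then (ρ α).frobeniusNormSq else 0) := fun a => by
    rw [trace_quiverMomentMap, ← mul_assoc, neg_mul, Complex.I_mul_I, neg_neg, one_mul,
      Complex.ofReal_re]
  have hswap : ∀ e : Q1 → Q0, ∑ a, h a * (∑ α, if e α = a then (ρ α).frobeniusNormSq else 0)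
      = ∑ α, h (e α) * (ρ α).frobeniusNormSq := fun e => by
    simp only [Finset.mul_sum, mul_ite, mul_zero]
    rw [Finset.sum_comm]
    simp
  simp only [centralPairing, hre, mul_sub, mul_add, Finset.sum_sub_distrib,
    Finset.sum_add_distrib, hswap, sub_mul]
  ring

theorem sum_frobeniusNormSq_le_centralPairing (h : Q0 → ℝ) (hh : ∀ α, h (s α) + 1 ≤ h (t α))
    (ρ : ∀ α : Q1, Matrix (Fin (d (t α))) (Fin (d (s α))) ℂ) :
    ∑ α, (ρ α).frobeniusNormSq
      ≤ centralPairing d h (quiverMomentMap s t d lam ρ) - ∑ a, h a * (lam a * d a) := by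
  rw [centralPairing_quiverMomentMap, add_sub_cancel_left]
  refine Finset.sum_le_sum fun α _ => le_mul_of_one_le_left (frobeniusNormSq_nonneg _) ?_
  linarith [hh α]

theorem isCompact_preimage_quiverMomentMap (h : Q0 → ℝ) (hh : ∀ α, h (s α) + 1 ≤ h (t α))
    {K : Set (∀ a : Q0, Matrix (Fin (d a)) (Fin (d a)) ℂ)} (hK : IsCompact K) :
    IsCompact (quiverMomentMap s t d lam ⁻¹' K) := by
  obtain ⟨C, hC⟩ := hK.exists_bound_of_continuousOn (continuous_centralPairing d h).continuousOn
  set c₀ := ∑ a, h a * (lam a * d a)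
  refine (isCompact_setOf_forall_norm_apply_le √(C - c₀)).of_isClosed_subset
    (hK.isClosed.preimage (continuous_quiverMomentMap s t d lam)) fun ρ hρ α i j => ?_
  refine Real.le_sqrt_of_sq_le ?_
  calc ‖ρ α i j‖ ^ 2 = Complex.normSq (ρ α i j) := Complex.sq_norm _
    _ ≤ (ρ α).frobeniusNormSq := normSq_le_frobeniusNormSq _ _ _
    _ ≤ ∑ α, (ρ α).frobeniusNormSq :=
      Finset.single_le_sum (fun _ _ => frobeniusNormSq_nonneg _) (Finset.mem_univ α)
    _ ≤ centralPairing d h (quiverMomentMap s t d lam ρ) - c₀ :=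
      sum_frobeniusNormSq_le_centralPairing s t d lam h hh ρ
    _ ≤ C - c₀ := by linarith [le_abs_self _ |>.trans (hC _ hρ)]

end MomentMap

theorem moment_map_proper_of_acyclic_general {Q0 Q1 : Type} [Fintype Q0] [Fintype Q1]
    [DecidableEq Q0] (s t : Q1 → Q0) (d : Q0 → ℕ)
    (lam : Q0 → ℝ)
    (hacyclic : ¬ ∃ (l : ℕ) (c : ℕ → Q1), 1 ≤ l ∧
      (∀ i, i + 1 < l → t (c i) = s (c (i + 1))) ∧ s (c 0) = t (c (l - 1))) :
    ∀ K : Set (∀ a : Q0, Matrix (Fin (d a)) (Fin (d a)) ℂ), IsCompact K →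
      IsCompact (quiverMomentMap s t d lam ⁻¹' K) := by
  obtain ⟨h, hh⟩ := exists_height_of_acyclic s t hacyclic
  exact fun K hK => isCompact_preimage_quiverMomentMap s t d lam (fun a => h a)
    (fun α => by exact_mod_cast hh α) hK

/-- For a nonempty finite acyclic quiver, any dimension vector `d` and rational weight
`θ`, the moment map `Φ_θ` (with `λ_a = θ_a − μ_θ(d)`) is proper. -/
theorem moment_map_proper_of_acyclic {Q0 Q1 : Type} [Fintype Q0] [Fintype Q1]
    [DecidableEq Q0] [Nonempty Q0] (s t : Q1 → Q0) (d : Q0 → ℕ) (θ : Q0 → ℚ)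
    (lam : Q0 → ℝ)
    (hlam : ∀ a, lam a = (θ a : ℝ) - (∑ b, (θ b : ℝ) * d b) / (∑ b, (d b : ℝ)))
    (hacyclic : ¬ ∃ (l : ℕ) (c : ℕ → Q1), 1 ≤ l ∧
      (∀ i, i + 1 < l → t (c i) = s (c (i + 1))) ∧ s (c 0) = t (c (l - 1))) :
    ∀ K : Set (∀ a : Q0, Matrix (Fin (d a)) (Fin (d a)) ℂ), IsCompact K →
      IsCompact (quiverMomentMap s t d lam ⁻¹' K) :=
  moment_map_proper_of_acyclic_general s t d lam hacyclic
end

section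
/- Let Q be a finite quiver, d a dimension vector with d_a > 0 for all vertices a, and θ a rational weight. The induced moment map Φ̄ : 𝒜 → Lie(K̄)* for the action of K̄ = K/(K ∩ H) (H the central subgroup of scalars) satisfies: Φ̄ is proper if and only if Q is acyclic. -/
open Matrix

namespace QMMAux

lemma sbm_mul {p q r : ℕ} (i : Fin p) (j : Fin q) (k : Fin r) (c e : ℂ) :
    Matrix.single i j c * Matrix.single j k e = Matrix.single i k (c * e) := by
  ext a b
  simp only [mul_apply, Matrix.single, of_apply, boole_mul]
  by_cases h₁ : i = a <;> by_cases h₂ : k = b <;> simp [h₁, h₂]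

lemma sbm_conjT {p q : ℕ} (i : Fin p) (j : Fin q) (c : ℂ) :
    (Matrix.single i j c)ᴴ = Matrix.single j i (star c) := by
  ext a b
  simp [Matrix.single, conjTranspose_apply, and_comm, apply_ite (star : ℂ → ℂ)]

lemma trace_mul_conjT {p q : ℕ} (A : Matrix (Fin p) (Fin q) ℂ) :
    (A * Aᴴ).trace = ((∑ i, ∑ j, Complex.normSq (A i j) : ℝ) : ℂ) := by
  simp [Matrix.trace, Matrix.diag, mul_apply, conjTranspose_apply, Complex.star_def,
    Complex.mul_conj]

variable {Q0 Q1 : Type} [Fintype Q1] [DecidableEq Q0]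

/-- squared Frobenius norm of an arrow component -/
noncomputable def nsq {s t : Q1 → Q0} {d : Q0 → ℕ}
    (ρ : ∀ α : Q1, Matrix (Fin (d (t α))) (Fin (d (s α))) ℂ) (α : Q1) : ℝ :=
  ∑ i, ∑ j, Complex.normSq (ρ α i j)

lemma nsq_nonneg {s t : Q1 → Q0} {d : Q0 → ℕ}
    (ρ : ∀ α : Q1, Matrix (Fin (d (t α))) (Fin (d (s α))) ℂ) (α : Q1) : 0 ≤ nsq ρ α :=
  Finset.sum_nonneg fun _ _ => Finset.sum_nonneg fun _ _ => Complex.normSq_nonneg _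

lemma trace_formula (s t : Q1 → Q0) (d : Q0 → ℕ) (lam : Q0 → ℝ)
    (ρ : ∀ α : Q1, Matrix (Fin (d (t α))) (Fin (d (s α))) ℂ) (a : Q0) :
    ((-Complex.I) * (quiverMomentMap s t d lam ρ a).trace).re
      = lam a * d a + (∑ α : Q1, if t α = a then nsq ρ α else 0)
        - (∑ α : Q1, if s α = a then nsq ρ α else 0) := by
  have h1 : (∑ α : Q1, if h : t α = a then h ▸ (ρ α * (ρ α)ᴴ) else 0).trace
      = ((∑ α : Q1, if t α = a then nsq ρ α else 0 : ℝ) : ℂ) := by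
    rw [Matrix.trace_sum]
    push_cast
    refine Finset.sum_congr rfl fun α _ => ?_
    by_cases h : t α = a
    · subst h
      rw [dif_pos rfl, if_pos rfl]
      exact trace_mul_conjT (ρ α)
    · simp [h]
  have h2 : (∑ α : Q1, if h : s α = a then h ▸ ((ρ α)ᴴ * ρ α) else 0).trace
      = ((∑ α : Q1, if s α = a then nsq ρ α else 0 : ℝ) : ℂ) := by
    rw [Matrix.trace_sum]
    push_cast
    refine Finset.sum_congr rfl fun α _ => ?_
    by_cases h : s α = a
    · subst h
      rw [dif_pos rfl, if_pos rfl, Matrix.trace_mul_comm]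
      exact trace_mul_conjT (ρ α)
    · simp [h]
  rw [quiverMomentMap, Matrix.trace_smul, Matrix.trace_sub, Matrix.trace_add,
    Matrix.trace_smul, Matrix.trace_one, h1, h2]
  simp [Complex.ext_iff]

end QMMAux

open QMMAux

/-- Suppose every vertex dimension is positive. The induced moment map
`Φ̄ : 𝒜 → Lie(K̄)*` — characterized by `Φ_θ = ι ∘ Φ̄` where
`ι = (T_e π_K)* : Lie(K̄)* → Lie(K)*` is the injective linear dual of the surjection
`T_e π_K : Lie(K) → Lie(K̄)` — is proper if and only if the quiver is acyclic. -/
theorem induced_moment_map_proper_iff_acyclic {Q0 Q1 : Type} [Fintype Q0] [Fintype Q1]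
    [DecidableEq Q0] [Nonempty Q0] (s t : Q1 → Q0) (d : Q0 → ℕ)
    (hd : ∀ a, 0 < d a) (θ : Q0 → ℚ) (lam : Q0 → ℝ)
    (hlam : ∀ a, lam a = (θ a : ℝ) - (∑ b, (θ b : ℝ) * d b) / (∑ b, (d b : ℝ)))
    {Lbar : Type} [NormedAddCommGroup Lbar] [NormedSpace ℝ Lbar]
    [FiniteDimensional ℝ Lbar]
    (ι : Lbar →ₗ[ℝ] (∀ a : Q0, Matrix (Fin (d a)) (Fin (d a)) ℂ))
    (hι : Function.Injective ι)
    (Φbar : (∀ α : Q1, Matrix (Fin (d (t α))) (Fin (d (s α))) ℂ) → Lbar)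
    (hfact : ∀ ρ, quiverMomentMap s t d lam ρ = ι (Φbar ρ)) :
    (∀ K : Set Lbar, IsCompact K → IsCompact (Φbar ⁻¹' K)) ↔
      ¬ ∃ (l : ℕ) (c : ℕ → Q1), 1 ≤ l ∧
        (∀ i, i + 1 < l → t (c i) = s (c (i + 1))) ∧ s (c 0) = t (c (l - 1)) := by
  classical
  constructor
  · -- proper → acyclic
    intro hproper hcyc
    obtain ⟨l, c, hl, hchain, hclose⟩ := hcyc
    set m : Q1 → ℕ := fun α => ((Finset.range l).filter fun i => c i = α).card with hm
    -- counting identity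
    have hsum_count : ∀ (u : Q1 → Q0) (a : Q0),
        (∑ α : Q1, if u α = a then (m α : ℝ) else 0)
          = (((Finset.range l).filter fun i => u (c i) = a).card : ℝ) := by
      intro u a
      have : (∑ α : Q1, if u α = a then (m α : ℕ) else 0)
          = ((Finset.range l).filter fun i => u (c i) = a).card := by
        rw [Finset.card_filter]
        have hmα : ∀ α : Q1, m α = ∑ i ∈ Finset.range l, if c i = α then 1 else 0 := by
          intro α; rw [hm]; exact Finset.card_filter _ _
        calc (∑ α : Q1, if u α = a then (m α : ℕ) else 0)
            = ∑ α : Q1, ∑ i ∈ Finset.range l,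
                (if c i = α then (if u α = a then 1 else 0) else 0) := by
              refine Finset.sum_congr rfl fun α _ => ?_
              by_cases h : u α = a
              · rw [if_pos h, hmα]
                refine Finset.sum_congr rfl fun i _ => ?_
                by_cases h2 : c i = α <;> simp [h, h2]
              · simp [h]
          _ = ∑ i ∈ Finset.range l, ∑ α : Q1,
                (if c i = α then (if u α = a then 1 else 0) else 0) := Finset.sum_comm
          _ = ∑ i ∈ Finset.range l, (if u (c i) = a then 1 else 0) := by
              refine Finset.sum_congr rfl fun i _ => ?_
              rw [Finset.sum_ite_eq]
              simp
      exact_mod_cast congrArg (Nat.cast : ℕ → ℝ) this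
    -- cyclic shift: the two counts agree
    have hcard : ∀ a : Q0, ((Finset.range l).filter fun i => t (c i) = a).card
        = ((Finset.range l).filter fun i => s (c i) = a).card := by
      intro a
      have hlpos : 0 < l := hl
      refine Finset.card_bij' (fun j _ => (j + 1) % l) (fun j _ => (j + (l - 1)) % l)
        ?_ ?_ ?_ ?_
      · intro j hj
        rw [Finset.mem_filter, Finset.mem_range] at hj ⊢
        obtain ⟨hjl, hja⟩ := hj
        refine ⟨Nat.mod_lt _ hlpos, ?_⟩
        by_cases h : j + 1 < l
        · rw [Nat.mod_eq_of_lt h, ← hchain j h]; exact hja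
        · have hj1 : j + 1 = l := by omega
          rw [hj1, Nat.mod_self, hclose]
          have : l - 1 = j := by omega
          rw [this]; exact hja
      · intro j hj
        rw [Finset.mem_filter, Finset.mem_range] at hj ⊢
        obtain ⟨hjl, hja⟩ := hj
        refine ⟨Nat.mod_lt _ hlpos, ?_⟩
        by_cases h : j = 0
        · subst h
          rw [Nat.zero_add, Nat.mod_eq_of_lt (by omega), ← hclose]; exact hja
        · have : (j + (l - 1)) % l = j - 1 := by
            have h1 : j + (l - 1) = (j - 1) + l := by omega
            rw [h1, Nat.add_mod_right, Nat.mod_eq_of_lt (by omega)]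
          rw [this, hchain (j - 1) (by omega)]
          have : j - 1 + 1 = j := by omega
          rw [this]; exact hja
      · intro j hj
        rw [Finset.mem_filter, Finset.mem_range] at hj
        rw [Nat.mod_add_mod]
        have h2 : (j + 1) + (l - 1) = j + l := by omega
        rw [h2, Nat.add_mod_right, Nat.mod_eq_of_lt hj.1]
      · intro j hj
        rw [Finset.mem_filter, Finset.mem_range] at hj
        rw [Nat.mod_add_mod]
        have h2 : (j + (l - 1)) + 1 = j + l := by omega
        rw [h2, Nat.add_mod_right, Nat.mod_eq_of_lt hj.1]
    -- the unbounded family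
    set ρfam : ℝ → ∀ α : Q1, Matrix (Fin (d (t α))) (Fin (d (s α))) ℂ :=
      fun r α => Matrix.single ⟨0, hd (t α)⟩ ⟨0, hd (s α)⟩
        ((r * Real.sqrt (m α) : ℝ) : ℂ) with hρfam
    have hmulT : ∀ (r : ℝ) (α : Q1), ρfam r α * (ρfam r α)ᴴ
        = Matrix.single (⟨0, hd (t α)⟩ : Fin (d (t α))) ⟨0, hd (t α)⟩
            (((r ^ 2 * m α : ℝ)) : ℂ) := by
      intro r α
      rw [hρfam]
      rw [sbm_conjT, sbm_mul]
      congr 1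
      rw [Complex.star_def, Complex.conj_ofReal, ← Complex.ofReal_mul]
      congr 1
      have h1 : (r * Real.sqrt (m α)) * (r * Real.sqrt (m α))
          = r ^ 2 * (Real.sqrt (m α) * Real.sqrt (m α)) := by ring
      rw [h1, Real.mul_self_sqrt (Nat.cast_nonneg _)]
    have hmulS : ∀ (r : ℝ) (α : Q1), (ρfam r α)ᴴ * ρfam r α
        = Matrix.single (⟨0, hd (s α)⟩ : Fin (d (s α))) ⟨0, hd (s α)⟩
            (((r ^ 2 * m α : ℝ)) : ℂ) := by
      intro r α
      rw [hρfam]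
      rw [sbm_conjT, sbm_mul]
      congr 1
      rw [Complex.star_def, Complex.conj_ofReal, ← Complex.ofReal_mul]
      congr 1
      have h1 : (r * Real.sqrt (m α)) * (r * Real.sqrt (m α))
          = r ^ 2 * (Real.sqrt (m α) * Real.sqrt (m α)) := by ring
      rw [h1, Real.mul_self_sqrt (Nat.cast_nonneg _)]
    have key : ∀ (r : ℝ) (a : Q0), quiverMomentMap s t d lam (ρfam r) a
        = Complex.I • ((lam a : ℂ) • (1 : Matrix (Fin (d a)) (Fin (d a)) ℂ)) := by
      intro r a
      rw [quiverMomentMap]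
      have hkey : ∀ (u : Q1 → Q0)
          (M : ∀ α : Q1, Matrix (Fin (d (u α))) (Fin (d (u α))) ℂ),
          (∀ α, M α = Matrix.single (⟨0, hd (u α)⟩ : Fin (d (u α))) ⟨0, hd (u α)⟩
            (((r ^ 2 * m α : ℝ)) : ℂ)) →
          (∑ α : Q1, if h : u α = a then h ▸ M α else 0)
            = (∑ α : Q1, if u α = a then ((r ^ 2 * m α : ℝ) : ℂ) else 0) •
              Matrix.single (⟨0, hd a⟩ : Fin (d a)) ⟨0, hd a⟩ (1 : ℂ) := by
        intro u M hM
        rw [Finset.sum_smul]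
        refine Finset.sum_congr rfl fun α _ => ?_
        by_cases h : u α = a
        · subst h
          rw [dif_pos rfl, if_pos rfl, hM α, smul_single, smul_eq_mul, mul_one]
        · simp [h]
      rw [hkey t (fun α => ρfam r α * (ρfam r α)ᴴ) (hmulT r),
        hkey s (fun α => (ρfam r α)ᴴ * ρfam r α) (hmulS r)]
      have hceq : (∑ α : Q1, if t α = a then ((r ^ 2 * m α : ℝ) : ℂ) else 0)
          = (∑ α : Q1, if s α = a then ((r ^ 2 * m α : ℝ) : ℂ) else 0) := by
        have hr : ∀ (u : Q1 → Q0), (∑ α : Q1, if u α = a then ((r ^ 2 * m α : ℝ) : ℂ) else 0)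
            = ((r ^ 2 : ℝ) : ℂ) * ((∑ α : Q1, if u α = a then (m α : ℝ) else 0 : ℝ) : ℂ) := by
          intro u
          push_cast
          rw [Finset.mul_sum]
          refine Finset.sum_congr rfl fun α _ => ?_
          by_cases h : u α = a <;> simp [h] <;> ring
        rw [hr t, hr s, hsum_count t a, hsum_count s a, hcard a]
      rw [hceq]
      rw [add_sub_cancel_right]
    -- Φbar is constant along the family
    have hmem : ∀ r : ℝ, ρfam r ∈ Φbar ⁻¹' {Φbar (ρfam 0)} := by
      intro r
      have h1 : ι (Φbar (ρfam r)) = ι (Φbar (ρfam 0)) := by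
        rw [← hfact, ← hfact]
        funext a
        rw [key r a, key 0 a]
      simpa using hι h1
    have hcom := hproper {Φbar (ρfam 0)} isCompact_singleton
    set f : (∀ α : Q1, Matrix (Fin (d (t α))) (Fin (d (s α))) ℂ) → ℝ :=
      fun ρ => (ρ (c 0) ⟨0, hd (t (c 0))⟩ ⟨0, hd (s (c 0))⟩).re with hf
    have hfc : Continuous f := by
      have h1 : Continuous fun ρ : (∀ α : Q1, Matrix (Fin (d (t α))) (Fin (d (s α))) ℂ) =>
          ρ (c 0) := continuous_apply _
      exact Complex.continuous_re.comp (h1.matrix_elem _ _)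
    obtain ⟨B, hB⟩ := (hcom.image hfc).bddAbove
    have hfval : ∀ r : ℝ, f (ρfam r) = r * Real.sqrt (m (c 0)) := by
      intro r
      rw [hf, hρfam]
      simp [Matrix.single_apply_same]
    have hm1 : 1 ≤ Real.sqrt (m (c 0)) := by
      rw [show (1 : ℝ) = Real.sqrt 1 from (Real.sqrt_one).symm]
      apply Real.sqrt_le_sqrt
      have : 0 ∈ (Finset.range l).filter fun i => c i = c 0 := by
        simp [Finset.mem_filter, Finset.mem_range]; omega
      have : 1 ≤ m (c 0) := Finset.card_pos.mpr ⟨0, this⟩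
      exact_mod_cast this
    have hB0 : 0 ≤ B := by
      have := hB ⟨ρfam 0, hmem 0, rfl⟩
      rw [hfval 0] at this
      linarith
    have hBB := hB ⟨ρfam (B + 1), hmem (B + 1), rfl⟩
    rw [hfval (B + 1)] at hBB
    nlinarith
  · -- acyclic → proper
    intro hacyc K hK
    set r : Q0 → Q0 → Prop := fun a b => ∃ α, s α = a ∧ t α = b with hrdef
    have hTG : ∀ a b, Relation.TransGen r a b → ∃ (l : ℕ) (c : ℕ → Q1), 1 ≤ l ∧
        (∀ i, i + 1 < l → t (c i) = s (c (i + 1))) ∧ s (c 0) = a ∧ t (c (l - 1)) = b := by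
      intro a b h
      induction h with
      | single hab =>
        obtain ⟨α, h1, h2⟩ := hab
        exact ⟨1, fun _ => α, le_refl 1, fun i hi => absurd hi (by omega), h1, h2⟩
      | tail _ hbc ih =>
        obtain ⟨l, cc, hl, hch, hc0, hcl⟩ := ih
        obtain ⟨α, h1, h2⟩ := hbc
        refine ⟨l + 1, fun i => if i < l then cc i else α, by omega, ?_, ?_, ?_⟩
        · intro i hi
          have hil : i < l := by omega
          dsimp only
          rw [if_pos hil]
          by_cases h : i + 1 < l
          · rw [if_pos h]; exact hch i h
          · have hieq : i = l - 1 := by omega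
            rw [if_neg h, hieq, hcl, h1]
        · dsimp only; rw [if_pos (by omega : 0 < l)]; exact hc0
        · dsimp only; rw [Nat.add_sub_cancel, if_neg (lt_irrefl l)]; exact h2
    have hirr : ∀ a, ¬ Relation.TransGen r a a := by
      intro a h
      obtain ⟨l, cc, hl, hch, hc0, hcl⟩ := hTG a a h
      exact hacyc ⟨l, cc, hl, hch, hc0.trans hcl.symm⟩
    set ht : Q0 → ℕ := fun a => Set.ncard {b | Relation.TransGen r b a} with hhtdef
    have hmono : ∀ α : Q1, (ht (s α) : ℝ) + 1 ≤ ht (t α) := by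
      intro α
      have hsub : {b | Relation.TransGen r b (s α)} ⊂ {b | Relation.TransGen r b (t α)} := by
        have hs1 : {b | Relation.TransGen r b (s α)} ⊆ {b | Relation.TransGen r b (t α)} :=
          fun b hb => hb.tail ⟨α, rfl, rfl⟩
        refine (Set.ssubset_iff_of_subset hs1).mpr ?_
        refine ⟨s α, Relation.TransGen.single ⟨α, rfl, rfl⟩, fun hc => hirr (s α) hc⟩
      have := Set.ncard_lt_ncard hsub (Set.toFinite _)
      have h2 : ht (s α) + 1 ≤ ht (t α) := this
      exact_mod_cast h2
    -- continuity of the moment map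
    have hcontΦ : Continuous (quiverMomentMap s t d lam) := by
      refine continuous_pi fun a => ?_
      unfold quiverMomentMap
      refine Continuous.fun_const_smul ?_ _
      refine Continuous.sub (Continuous.add continuous_const ?_) ?_
      · refine continuous_finset_sum _ fun α _ => ?_
        by_cases h : t α = a
        · subst h
          simp only [dif_pos]
          exact Continuous.matrix_mul (continuous_apply α)
            ((continuous_apply α).matrix_conjTranspose)
        · simp only [dif_neg h]; exact continuous_const
      · refine continuous_finset_sum _ fun α _ => ?_
        by_cases h : s α = a
        · subst h
          simp only [dif_pos]
          exact Continuous.matrix_mul ((continuous_apply α).matrix_conjTranspose)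
            (continuous_apply α)
        · simp only [dif_neg h]; exact continuous_const
    have hcontι : Continuous ι := ι.continuous_of_finiteDimensional
    have hset : Φbar ⁻¹' K = quiverMomentMap s t d lam ⁻¹' (ι '' K) := by
      ext ρ
      simp only [Set.mem_preimage, hfact, Set.mem_image]
      constructor
      · intro hk; exact ⟨Φbar ρ, hk, rfl⟩
      · rintro ⟨y, hy, hEq⟩; rwa [← hι hEq]
    have hCcomp : IsCompact (ι '' K) := hK.image hcontι
    have hclosed : IsClosed (Φbar ⁻¹' K) := by
      rw [hset]; exact hCcomp.isClosed.preimage hcontΦ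
    -- the bounding function
    set g : Lbar → ℝ := fun y => ∑ a, (ht a : ℝ) * ((-Complex.I) * (ι y a).trace).re with hgdef
    have hgcont : Continuous g := by
      refine continuous_finset_sum _ fun a _ => ?_
      refine Continuous.mul continuous_const ?_
      refine Complex.continuous_re.comp ?_
      refine Continuous.mul continuous_const ?_
      exact ((continuous_apply a).comp hcontι).matrix_trace
    obtain ⟨B, hB⟩ := (hK.image hgcont).bddAbove
    set Λ : ℝ := ∑ a, (ht a : ℝ) * (lam a * d a) with hΛdef
    have hgρ : ∀ ρ : (∀ α : Q1, Matrix (Fin (d (t α))) (Fin (d (s α))) ℂ),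
        g (Φbar ρ) = Λ + ∑ α : Q1, ((ht (t α) : ℝ) - ht (s α)) * nsq ρ α := by
      intro ρ
      have hswap : ∀ u : Q1 → Q0,
          (∑ a, (ht a : ℝ) * ∑ α : Q1, (if u α = a then nsq ρ α else 0))
            = ∑ α : Q1, (ht (u α) : ℝ) * nsq ρ α := by
        intro u
        simp_rw [Finset.mul_sum]
        rw [Finset.sum_comm]
        refine Finset.sum_congr rfl fun α _ => ?_
        rw [show (∑ a, (ht a : ℝ) * (if u α = a then nsq ρ α else 0))
            = ∑ a, (if u α = a then (ht a : ℝ) * nsq ρ α else 0) from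
          Finset.sum_congr rfl fun a _ => by by_cases h : u α = a <;> simp [h]]
        rw [Finset.sum_ite_eq]
        simp
      calc g (Φbar ρ) = ∑ a, (ht a : ℝ) * ((-Complex.I) *
            (quiverMomentMap s t d lam ρ a).trace).re := by
            rw [hgdef]
            refine Finset.sum_congr rfl fun a _ => ?_
            rw [hfact ρ]
        _ = ∑ a, (ht a : ℝ) * (lam a * d a
              + (∑ α : Q1, if t α = a then nsq ρ α else 0)
              - (∑ α : Q1, if s α = a then nsq ρ α else 0)) := by
            refine Finset.sum_congr rfl fun a _ => ?_
            rw [trace_formula]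
        _ = Λ + ((∑ a, (ht a : ℝ) * ∑ α : Q1, (if t α = a then nsq ρ α else 0))
              - (∑ a, (ht a : ℝ) * ∑ α : Q1, (if s α = a then nsq ρ α else 0))) := by
            rw [hΛdef]
            rw [← Finset.sum_sub_distrib, ← Finset.sum_add_distrib]
            refine Finset.sum_congr rfl fun a _ => ?_
            ring
        _ = Λ + ∑ α : Q1, ((ht (t α) : ℝ) - ht (s α)) * nsq ρ α := by
            rw [hswap t, hswap s, ← Finset.sum_sub_distrib]
            congr 1
            refine Finset.sum_congr rfl fun α _ => ?_
            ring
    have hbound : ∀ ρ ∈ Φbar ⁻¹' K, (∑ α : Q1, nsq ρ α) ≤ B - Λ := by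
      intro ρ hρ
      have h1 : g (Φbar ρ) ≤ B := hB ⟨Φbar ρ, hρ, rfl⟩
      have h2 := hgρ ρ
      have h3 : (∑ α : Q1, nsq ρ α) ≤ ∑ α : Q1, ((ht (t α) : ℝ) - ht (s α)) * nsq ρ α := by
        refine Finset.sum_le_sum fun α _ => ?_
        have hα := hmono α
        have hnn := nsq_nonneg ρ α
        nlinarith
      linarith
    set R : ℝ := Real.sqrt (max (B - Λ) 0) with hRdef
    have hentry : ∀ ρ ∈ Φbar ⁻¹' K, ∀ (α : Q1) (i : Fin (d (t α))) (j : Fin (d (s α))),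
        ρ α i j ∈ Metric.closedBall (0 : ℂ) R := by
      intro ρ hρ α i j
      rw [Metric.mem_closedBall, dist_zero_right]
      have h1 : Complex.normSq (ρ α i j) ≤ max (B - Λ) 0 := by
        have h2 := hbound ρ hρ
        have h3 : Complex.normSq (ρ α i j) ≤ nsq ρ α := by
          calc Complex.normSq (ρ α i j) ≤ ∑ j', Complex.normSq (ρ α i j') :=
                Finset.single_le_sum (fun _ _ => Complex.normSq_nonneg _) (Finset.mem_univ j)
            _ ≤ nsq ρ α := Finset.single_le_sum
                (f := fun i' => ∑ j', Complex.normSq (ρ α i' j'))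
                (fun _ _ => Finset.sum_nonneg fun _ _ => Complex.normSq_nonneg _)
                (Finset.mem_univ i)
        have h4 : nsq ρ α ≤ ∑ α' : Q1, nsq ρ α' :=
          Finset.single_le_sum (fun α' _ => nsq_nonneg ρ α') (Finset.mem_univ α)
        have h5 : (B - Λ) ≤ max (B - Λ) 0 := le_max_left _ _
        linarith
      have h6 : ‖ρ α i j‖ = Real.sqrt (Complex.normSq (ρ α i j)) := by
        rw [Complex.norm_def]
      rw [h6, hRdef]
      exact Real.sqrt_le_sqrt h1
    have hboxeq : {ρ : ∀ α : Q1, Matrix (Fin (d (t α))) (Fin (d (s α))) ℂ |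
          ∀ (α : Q1) (i : Fin (d (t α))) (j : Fin (d (s α))),
            ρ α i j ∈ Metric.closedBall (0 : ℂ) R}
        = Set.univ.pi fun α : Q1 =>
            (Set.univ.pi fun i : Fin (d (t α)) =>
              Set.univ.pi fun _ : Fin (d (s α)) => Metric.closedBall (0 : ℂ) R :
              Set (Matrix (Fin (d (t α))) (Fin (d (s α))) ℂ)) := by
      ext ρ
      show _ ↔ ∀ α, α ∈ Set.univ → ∀ i, i ∈ Set.univ → ∀ j, j ∈ Set.univ →
        ρ α i j ∈ Metric.closedBall (0 : ℂ) R
      simp [Set.mem_pi]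
    have hbox : IsCompact {ρ : ∀ α : Q1, Matrix (Fin (d (t α))) (Fin (d (s α))) ℂ |
        ∀ (α : Q1) (i : Fin (d (t α))) (j : Fin (d (s α))),
          ρ α i j ∈ Metric.closedBall (0 : ℂ) R} := by
      rw [hboxeq]
      exact isCompact_univ_pi fun α => isCompact_univ_pi fun i =>
        isCompact_univ_pi fun j => isCompact_closedBall 0 R
    exact hbox.of_isClosed_subset hclosed hentry
end

section
/- Let Q be a finite acyclic quiver and β an arrow of Q whose source is not the target of any arrow. Let Q' be the quiver obtained from Q by deleting β. Then the representation space of Q decomposes as 𝒜 ≅ 𝒜' × Hom(V_{s(β)}, V_{t(β)}) with ‖ρ‖² = ‖π(ρ)‖² + ‖ρ_β‖², and for every vertex a the moment map components satisfy Φ(ρ)_a = Ψ(π(ρ))_a + k(a)·√(-1)·(component involving ρ_β), where Ψ is the moment map of Q', k(a) = −1 if a = s(β), k(a) = +1 if a = t(β) ≠ s(β), and k(a) = 0 otherwise, and the ρ_β-term is ρ_β*ρ_β at a = s(β) and ρ_βρ_β* at a = t(β). -/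
open Matrix

attribute [local instance] Matrix.frobeniusNormedAddCommGroup

theorem quiverMomentMap_eq_deleteArrow_add_sub {Q0 Q1 : Type} [Fintype Q1] [DecidableEq Q0]
    [DecidableEq Q1] (s t : Q1 → Q0) (d : Q0 → ℕ) (lam : Q0 → ℝ) (β : Q1)
    (ρ : ∀ α : Q1, Matrix (Fin (d (t α))) (Fin (d (s α))) ℂ) (a : Q0) :
    quiverMomentMap s t d lam ρ a =
      quiverMomentMap (fun α : {α : Q1 // α ≠ β} => s α.1)
        (fun α => t α.1) d lam (fun α => ρ α.1) a
      + Complex.I • (if h : t β = a then h ▸ (ρ β * (ρ β)ᴴ) else 0)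
      - Complex.I • (if h : s β = a then h ▸ ((ρ β)ᴴ * ρ β) else 0) := by
  simp only [quiverMomentMap]
  rw [Fintype.sum_eq_add_sum_subtype_ne _ β, Fintype.sum_eq_add_sum_subtype_ne _ β]
  simp only [smul_add, smul_sub]
  abel

theorem moment_map_delete_arrow_general {Q0 Q1 : Type} [Fintype Q1]
    [DecidableEq Q0] [DecidableEq Q1] (s t : Q1 → Q0) (d : Q0 → ℕ) (lam : Q0 → ℝ)
    (β : Q1) (hβ : ∀ α : Q1, t α ≠ s β)
    (ρ : ∀ α : Q1, Matrix (Fin (d (t α))) (Fin (d (s α))) ℂ) :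
    (∑ α : Q1, ‖ρ α‖ ^ 2) = (∑ α : {α : Q1 // α ≠ β}, ‖ρ α.1‖ ^ 2) + ‖ρ β‖ ^ 2 ∧
    (∀ a : Q0, a ≠ s β → a ≠ t β →
      quiverMomentMap s t d lam ρ a =
        quiverMomentMap (fun α : {α : Q1 // α ≠ β} => s α.1)
          (fun α => t α.1) d lam (fun α => ρ α.1) a) ∧
    quiverMomentMap s t d lam ρ (s β) =
      quiverMomentMap (fun α : {α : Q1 // α ≠ β} => s α.1)
        (fun α => t α.1) d lam (fun α => ρ α.1) (s β)
      - Complex.I • ((ρ β)ᴴ * ρ β) ∧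
    quiverMomentMap s t d lam ρ (t β) =
      quiverMomentMap (fun α : {α : Q1 // α ≠ β} => s α.1)
        (fun α => t α.1) d lam (fun α => ρ α.1) (t β)
      + Complex.I • (ρ β * (ρ β)ᴴ) := by
  have hloop : t β ≠ s β := hβ β
  refine ⟨(Fintype.sum_eq_add_sum_subtype_ne _ β).trans (add_comm _ _), ?_, ?_, ?_⟩
  · intro a hs ht
    rw [quiverMomentMap_eq_deleteArrow_add_sub, dif_neg (Ne.symm ht), dif_neg (Ne.symm hs)]
    simp
  · rw [quiverMomentMap_eq_deleteArrow_add_sub, dif_neg hloop, dif_pos rfl]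
    simp
  · rw [quiverMomentMap_eq_deleteArrow_add_sub, dif_pos rfl, dif_neg hloop.symm]
    simp

/-- Deleting an arrow `β` whose source is not the target of any arrow decomposes the
representation space as `𝒜 ≅ 𝒜' × Hom(V_{s β}, V_{t β})` with
`‖ρ‖² = ‖π(ρ)‖² + ‖ρ_β‖²`, and the moment map of `Q` differs from that of
`Q' = Q ∖ {β}` only at the vertices `s β` (by `−√-1·ρ_β*ρ_β`) and `t β`
(by `+√-1·ρ_β ρ_β*`). -/
theorem moment_map_delete_arrow {Q0 Q1 : Type} [Fintype Q0] [Fintype Q1]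
    [DecidableEq Q0] [DecidableEq Q1] (s t : Q1 → Q0) (d : Q0 → ℕ) (lam : Q0 → ℝ)
    (hacyclic : ¬ ∃ (l : ℕ) (c : ℕ → Q1), 1 ≤ l ∧
      (∀ i, i + 1 < l → t (c i) = s (c (i + 1))) ∧ s (c 0) = t (c (l - 1)))
    (β : Q1) (hβ : ∀ α : Q1, t α ≠ s β)
    (ρ : ∀ α : Q1, Matrix (Fin (d (t α))) (Fin (d (s α))) ℂ) :
    (∑ α : Q1, ‖ρ α‖ ^ 2) = (∑ α : {α : Q1 // α ≠ β}, ‖ρ α.1‖ ^ 2) + ‖ρ β‖ ^ 2 ∧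
    (∀ a : Q0, a ≠ s β → a ≠ t β →
      quiverMomentMap s t d lam ρ a =
        quiverMomentMap (fun α : {α : Q1 // α ≠ β} => s α.1)
          (fun α => t α.1) d lam (fun α => ρ α.1) a) ∧
    quiverMomentMap s t d lam ρ (s β) =
      quiverMomentMap (fun α : {α : Q1 // α ≠ β} => s α.1)
        (fun α => t α.1) d lam (fun α => ρ α.1) (s β)
      - Complex.I • ((ρ β)ᴴ * ρ β) ∧
    quiverMomentMap s t d lam ρ (t β) =
      quiverMomentMap (fun α : {α : Q1 // α ≠ β} => s α.1)
        (fun α => t α.1) d lam (fun α => ρ α.1) (t β)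
      + Complex.I • (ρ β * (ρ β)ᴴ) :=
  moment_map_delete_arrow_general s t d lam β hβ ρ
end
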